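/- arXiv:2411.08366 — 7 statements merged into one kernel-verified Lean document; each statement's English description precedes it below -/
import Mathlib

section
/- Let p be a real number with p ≠ 1, let 0 < r₀ < r₁, and let φ : [r₀, r₁] → ℝ be continuously differentiable. Then ((p−1)²/4) ∫_{r₀}^{r₁} φ(r)² r^{p−2} dr ≤ ∫_{r₀}^{r₁} (φ′(r))² r^{p} dr + ((p−1)/2) ( r₁^{p−1} φ(r₁)² − r₀^{p−1} φ(r₀)² ). -/
open MeasureTheory

/-!
Completing the square: with `ψ r = φ' r * r ^ (p/2) + (p-1)/2 * φ r * r ^ ((p-2)/2)`,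
`ψ² = φ'² r^p + (p-1)/2 * (r^(p-1) φ²)' - (p-1)²/4 * φ² r^(p-2)`.
Integrating, the middle term becomes the boundary term by the fundamental theorem of
calculus, and `0 ≤ ∫ ψ²` is the inequality.
-/

open Set

section Hardy

variable {p r₀ r₁ : ℝ} {φ φ' : ℝ → ℝ}

lemma hasDerivAt_rpow_sub_one_mul_sq {f : ℝ → ℝ} {f' r : ℝ} (hr : 0 < r)
    (hf : HasDerivAt f f' r) :
    HasDerivAt (fun x => x ^ (p - 1) * f x ^ 2)
      ((p - 1) * r ^ (p - 2) * f r ^ 2 + r ^ (p - 1) * (2 * f r * f')) r := by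
  have hpow := Real.hasDerivAt_rpow_const (p := p - 1) (Or.inl hr.ne')
  refine (hpow.fun_mul (hf.fun_pow 2)).congr_deriv ?_
  rw [show p - 1 - 1 = p - 2 by ring]
  push_cast
  ring

lemma sq_add_mul_rpow_eq {r : ℝ} (hr : 0 < r) (a b : ℝ) :
    (a * r ^ (p / 2) + (p - 1) / 2 * b * r ^ ((p - 2) / 2)) ^ 2 =
      a ^ 2 * r ^ p + (p - 1) / 2 * ((p - 1) * r ^ (p - 2) * b ^ 2 + r ^ (p - 1) * (2 * b * a))
        - (p - 1) ^ 2 / 4 * (b ^ 2 * r ^ (p - 2)) := by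
  have h₁ : r ^ (p / 2) * r ^ (p / 2) = r ^ p := by
    rw [← Real.rpow_add hr]; ring_nf
  have h₂ : r ^ (p / 2) * r ^ ((p - 2) / 2) = r ^ (p - 1) := by
    rw [← Real.rpow_add hr]; ring_nf
  have h₃ : r ^ ((p - 2) / 2) * r ^ ((p - 2) / 2) = r ^ (p - 2) := by
    rw [← Real.rpow_add hr]; ring_nf
  linear_combination a ^ 2 * h₁ + (p - 1) * b * a * h₂ + (p - 1) ^ 2 / 4 * b ^ 2 * h₃

lemma integral_deriv_rpow_sub_one_mul_sq (hr₀ : 0 < r₀) (hle : r₀ ≤ r₁)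
    (hderiv : ∀ r ∈ Icc r₀ r₁, HasDerivAt φ (φ' r) r)
    (hcont : ContinuousOn φ' (Icc r₀ r₁)) :
    ∫ r in r₀..r₁, ((p - 1) * r ^ (p - 2) * φ r ^ 2 + r ^ (p - 1) * (2 * φ r * φ' r)) =
      r₁ ^ (p - 1) * φ r₁ ^ 2 - r₀ ^ (p - 1) * φ r₀ ^ 2 := by
  have hφ : ContinuousOn φ (Icc r₀ r₁) := fun r hr =>
    (hderiv r hr).continuousAt.continuousWithinAt
  have hne : ∀ r ∈ Icc r₀ r₁, r ≠ 0 := fun r hr => (hr₀.trans_le hr.1).ne'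
  refine intervalIntegral.integral_eq_sub_of_hasDerivAt (f := fun x => x ^ (p - 1) * φ x ^ 2)
    (fun r hr => ?_)
    (ContinuousOn.intervalIntegrable_of_Icc hle (by fun_prop (disch := exact hne)))
  rw [uIcc_of_le hle] at hr
  exact hasDerivAt_rpow_sub_one_mul_sq (hr₀.trans_le hr.1) (hderiv r hr)

lemma integral_hardy_sq_eq (hr₀ : 0 < r₀) (hle : r₀ ≤ r₁)
    (hderiv : ∀ r ∈ Icc r₀ r₁, HasDerivAt φ (φ' r) r)
    (hcont : ContinuousOn φ' (Icc r₀ r₁)) :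
    ∫ r in r₀..r₁, (φ' r * r ^ (p / 2) + (p - 1) / 2 * φ r * r ^ ((p - 2) / 2)) ^ 2 =
      (∫ r in r₀..r₁, φ' r ^ 2 * r ^ p)
        + (p - 1) / 2 * (r₁ ^ (p - 1) * φ r₁ ^ 2 - r₀ ^ (p - 1) * φ r₀ ^ 2)
        - (p - 1) ^ 2 / 4 * ∫ r in r₀..r₁, φ r ^ 2 * r ^ (p - 2) := by
  have hφ : ContinuousOn φ (Icc r₀ r₁) := fun r hr =>
    (hderiv r hr).continuousAt.continuousWithinAt
  have hne : ∀ r ∈ Icc r₀ r₁, r ≠ 0 := fun r hr => (hr₀.trans_le hr.1).ne'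
  have hint {f : ℝ → ℝ} (hf : ContinuousOn f (Icc r₀ r₁)) : IntervalIntegrable f volume r₀ r₁ :=
    hf.intervalIntegrable_of_Icc hle
  rw [← integral_deriv_rpow_sub_one_mul_sq hr₀ hle hderiv hcont,
    ← intervalIntegral.integral_const_mul, ← intervalIntegral.integral_const_mul,
    ← intervalIntegral.integral_add, ← intervalIntegral.integral_sub]
  · refine intervalIntegral.integral_congr fun r hr => ?_
    rw [uIcc_of_le hle] at hr
    exact sq_add_mul_rpow_eq (hr₀.trans_le hr.1) _ _
  all_goals exact hint (by fun_prop (disch := exact hne))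

end Hardy

theorem hardy_inequality_general
    (p r₀ r₁ : ℝ) (hr₀ : 0 < r₀) (hr : r₀ < r₁)
    (φ φ' : ℝ → ℝ)
    (hderiv : ∀ r ∈ Set.Icc r₀ r₁, HasDerivAt φ (φ' r) r)
    (hcont : ContinuousOn φ' (Set.Icc r₀ r₁)) :
    ((p - 1) ^ 2 / 4) * ∫ r in r₀..r₁, (φ r) ^ 2 * r ^ (p - 2) ≤
      (∫ r in r₀..r₁, (φ' r) ^ 2 * r ^ p)
        + ((p - 1) / 2) * (r₁ ^ (p - 1) * (φ r₁) ^ 2 - r₀ ^ (p - 1) * (φ r₀) ^ 2) := by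
  have hsq := integral_hardy_sq_eq hr₀ hr.le hderiv hcont (p := p)
  have hnonneg :
      0 ≤ ∫ r in r₀..r₁, (φ' r * r ^ (p / 2) + (p - 1) / 2 * φ r * r ^ ((p - 2) / 2)) ^ 2 :=
    intervalIntegral.integral_nonneg hr.le fun _ _ => sq_nonneg _
  linarith

/-- **Hardy inequality with exact constant.**
If `p ≠ 1`, `0 < r₀ < r₁` and `φ` is continuously differentiable on `[r₀, r₁]`
(with derivative `φ'`), then
`((p−1)²/4) ∫_{r₀}^{r₁} φ² r^{p−2} dr
  ≤ ∫_{r₀}^{r₁} (φ')² r^p dr + ((p−1)/2) (r₁^{p−1} φ(r₁)² − r₀^{p−1} φ(r₀)²)`. -/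
theorem hardy_inequality
    (p r₀ r₁ : ℝ) (hp : p ≠ 1) (hr₀ : 0 < r₀) (hr : r₀ < r₁)
    (φ φ' : ℝ → ℝ)
    (hderiv : ∀ r ∈ Set.Icc r₀ r₁, HasDerivAt φ (φ' r) r)
    (hcont : ContinuousOn φ' (Set.Icc r₀ r₁)) :
    ((p - 1) ^ 2 / 4) * ∫ r in r₀..r₁, (φ r) ^ 2 * r ^ (p - 2) ≤
      (∫ r in r₀..r₁, (φ' r) ^ 2 * r ^ p)
        + ((p - 1) / 2) * (r₁ ^ (p - 1) * (φ r₁) ^ 2 - r₀ ^ (p - 1) * (φ r₀) ^ 2) :=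
  hardy_inequality_general p r₀ r₁ hr₀ hr φ φ' hderiv hcont
end

section
/- Let n be a real number, let q be a real number with q ≠ n, let 0 < r₀ < r₁, and let φ : [r₀, r₁] → ℝ be continuously differentiable. Then ((q−n)²/4) ∫_{r₀}^{r₁} φ(r)² r^{q−2} dr ≤ ∫_{r₀}^{r₁} ( φ′(r) + ((n−1)/(2r)) φ(r) )² r^{q} dr + ((q−n)/2) ( r₁^{q−1} φ(r₁)² − r₀^{q−1} φ(r₀)² ). -/
/-!
Write `c = (q - n) / 2`. Completing the square, pointwise for `r > 0`,
`(φ' + (n-1)/(2r) φ)² r^q + c (r^{q-1} φ²)' - c² φ² r^{q-2} = r^{q-2} (r φ' + (q-1)/2 φ)² ≥ 0`.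
Integrating over `[r₀, r₁]` and evaluating the exact derivative by the fundamental theorem of
calculus gives the inequality.
-/

open MeasureTheory Set

lemma sq_mul_rpow_le_add_mul_deriv {n q r : ℝ} (hr : 0 < r) (a b : ℝ) :
    ((q - n) / 2) ^ 2 * (a ^ 2 * r ^ (q - 2)) ≤
      (b + (n - 1) / (2 * r) * a) ^ 2 * r ^ q
        + (q - n) / 2 * ((q - 1) * r ^ (q - 2) * a ^ 2 + r ^ (q - 1) * (2 * a * b)) := by
  have hq : r ^ q = r ^ (q - 2) * r ^ 2 := by
    rw [← Real.rpow_natCast, ← Real.rpow_add hr]; norm_num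
  have hq₁ : r ^ (q - 1) = r ^ (q - 2) * r := by
    rw [← Real.rpow_add_one hr.ne']; ring_nf
  have hsquare : (b + (n - 1) / (2 * r) * a) ^ 2 * r ^ q
        + (q - n) / 2 * ((q - 1) * r ^ (q - 2) * a ^ 2 + r ^ (q - 1) * (2 * a * b))
        - ((q - n) / 2) ^ 2 * (a ^ 2 * r ^ (q - 2))
      = r ^ (q - 2) * (r * b + (q - 1) / 2 * a) ^ 2 := by
    rw [hq, hq₁]
    field_simp
    ring
  linarith [mul_nonneg (Real.rpow_nonneg hr.le (q - 2)) (sq_nonneg (r * b + (q - 1) / 2 * a))]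

lemma integral_deriv_rpow_mul_sq {s r₀ r₁ : ℝ} {φ φ' : ℝ → ℝ} (hr₀ : 0 < r₀) (hr : r₀ ≤ r₁)
    (hderiv : ∀ r ∈ Icc r₀ r₁, HasDerivAt φ (φ' r) r) (hcont : ContinuousOn φ' (Icc r₀ r₁)) :
    ∫ r in r₀..r₁, (s * r ^ (s - 1) * φ r ^ 2 + r ^ s * (2 * φ r * φ' r)) =
      r₁ ^ s * φ r₁ ^ 2 - r₀ ^ s * φ r₀ ^ 2 := by
  have hpos : ∀ r ∈ Icc r₀ r₁, r ≠ 0 := fun r hr => (hr₀.trans_le hr.1).ne'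
  have hφ : ContinuousOn φ (Icc r₀ r₁) := HasDerivAt.continuousOn hderiv
  refine intervalIntegral.integral_eq_sub_of_hasDerivAt (f := fun r => r ^ s * φ r ^ 2)
    (fun r hr' => ?_) (ContinuousOn.intervalIntegrable_of_Icc (μ := volume) hr ?_)
  · rw [uIcc_of_le hr] at hr'
    refine ((Real.hasDerivAt_rpow_const (p := s) (Or.inl (hpos r hr'))).fun_mul
      ((hderiv r hr').fun_pow 2)).congr_deriv ?_
    norm_num
  · fun_prop (disch := assumption)

theorem hardy_inequality_variant_general
    (n q r₀ r₁ : ℝ) (hr₀ : 0 < r₀) (hr : r₀ < r₁)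
    (φ φ' : ℝ → ℝ)
    (hderiv : ∀ r ∈ Set.Icc r₀ r₁, HasDerivAt φ (φ' r) r)
    (hcont : ContinuousOn φ' (Set.Icc r₀ r₁)) :
    ((q - n) ^ 2 / 4) * ∫ r in r₀..r₁, (φ r) ^ 2 * r ^ (q - 2) ≤
      (∫ r in r₀..r₁, (φ' r + ((n - 1) / (2 * r)) * φ r) ^ 2 * r ^ q)
        + ((q - n) / 2) * (r₁ ^ (q - 1) * (φ r₁) ^ 2 - r₀ ^ (q - 1) * (φ r₀) ^ 2) := by
  have hpos : ∀ r ∈ Icc r₀ r₁, r ≠ 0 := fun r hr => (hr₀.trans_le hr.1).ne'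
  have hpos₂ : ∀ r ∈ Icc r₀ r₁, 2 * r ≠ 0 := fun r hr => mul_ne_zero two_ne_zero (hpos r hr)
  have hφ : ContinuousOn φ (Icc r₀ r₁) := HasDerivAt.continuousOn hderiv
  have hA : IntervalIntegrable (fun r => (φ' r + ((n - 1) / (2 * r)) * φ r) ^ 2 * r ^ q)
      volume r₀ r₁ :=
    ContinuousOn.intervalIntegrable_of_Icc hr.le (by fun_prop (disch := assumption))
  have hB : IntervalIntegrable (fun r => φ r ^ 2 * r ^ (q - 2)) volume r₀ r₁ :=
    ContinuousOn.intervalIntegrable_of_Icc hr.le (by fun_prop (disch := assumption))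
  have hD : IntervalIntegrable
      (fun r => (q - 1) * r ^ (q - 2) * φ r ^ 2 + r ^ (q - 1) * (2 * φ r * φ' r)) volume r₀ r₁ :=
    ContinuousOn.intervalIntegrable_of_Icc hr.le (by fun_prop (disch := assumption))
  have hFTC := integral_deriv_rpow_mul_sq (s := q - 1) hr₀ hr.le hderiv hcont
  rw [show q - 1 - 1 = q - 2 by ring] at hFTC
  calc (q - n) ^ 2 / 4 * ∫ r in r₀..r₁, φ r ^ 2 * r ^ (q - 2)
      = ∫ r in r₀..r₁, ((q - n) / 2) ^ 2 * (φ r ^ 2 * r ^ (q - 2)) := by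
        rw [intervalIntegral.integral_const_mul]; ring
    _ ≤ ∫ r in r₀..r₁, ((φ' r + (n - 1) / (2 * r) * φ r) ^ 2 * r ^ q
          + (q - n) / 2 * ((q - 1) * r ^ (q - 2) * φ r ^ 2 + r ^ (q - 1) * (2 * φ r * φ' r))) :=
        intervalIntegral.integral_mono_on hr.le (hB.const_mul _) (hA.add (hD.const_mul _))
          fun r hr => sq_mul_rpow_le_add_mul_deriv (hr₀.trans_le hr.1) (φ r) (φ' r)
    _ = _ := by
        rw [intervalIntegral.integral_add hA (hD.const_mul _), intervalIntegral.integral_const_mul,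
          hFTC]

/-- **Hardy inequality, variant for the conjugated radial derivative.**
If `q ≠ n`, `0 < r₀ < r₁` and `φ` is continuously differentiable on `[r₀, r₁]`
(with derivative `φ'`), then
`((q−n)²/4) ∫_{r₀}^{r₁} φ² r^{q−2} dr
  ≤ ∫_{r₀}^{r₁} (φ' + ((n−1)/(2r)) φ)² r^q dr
    + ((q−n)/2) (r₁^{q−1} φ(r₁)² − r₀^{q−1} φ(r₀)²)`. -/
theorem hardy_inequality_variant
    (n q r₀ r₁ : ℝ) (hq : q ≠ n) (hr₀ : 0 < r₀) (hr : r₀ < r₁)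
    (φ φ' : ℝ → ℝ)
    (hderiv : ∀ r ∈ Set.Icc r₀ r₁, HasDerivAt φ (φ' r) r)
    (hcont : ContinuousOn φ' (Set.Icc r₀ r₁)) :
    ((q - n) ^ 2 / 4) * ∫ r in r₀..r₁, (φ r) ^ 2 * r ^ (q - 2) ≤
      (∫ r in r₀..r₁, (φ' r + ((n - 1) / (2 * r)) * φ r) ^ 2 * r ^ q)
        + ((q - n) / 2) * (r₁ ^ (q - 1) * (φ r₁) ^ 2 - r₀ ^ (q - 1) * (φ r₀) ^ 2) :=
  hardy_inequality_variant_general n q r₀ r₁ hr₀ hr φ φ' hderiv hcont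
end

section
/- Let R > 0, let p, q ∈ ℝ, let s ∈ (0, 1], let ε ∈ (0, s), and let D₁, D₂ > 0. Suppose f : [0, ∞) × [R, ∞) → ℝ is measurable and satisfies, for every τ ≥ 0, ∫_R^∞ r^{p−ε} f(τ, r)² dr ≤ D₁ (1+τ)^{−q} and ∫_R^∞ r^{p+s−ε} f(τ, r)² dr ≤ D₂ (1+τ)^{−q+1}. Then there is a constant C, depending only on R, s, ε, such that for all τ ≥ 0, ∫_R^∞ r^{p} f(τ, r)² dr ≤ C · max{D₁, D₂} · (1+τ)^{−q+1−s+ε}. -/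
/-! Splitting the `r`-integral at `r = 1 + τ` (the paper splits at `R + τ`, which only changes
the constant): for `r ≤ 1 + τ` one has `r ^ p ≤ (1 + τ) ^ ε r ^ (p - ε)`, and for `r ≥ 1 + τ`
one has `r ^ p ≤ (1 + τ) ^ (ε - s) r ^ (p + s - ε)`. Inserting the two hypotheses, both
contributions decay at least like `(1 + τ) ^ (-q + 1 - s + ε)`, the first one because `s ≤ 1`. -/

open MeasureTheory

theorem rpow_le_add_of_split {r ρ a b p : ℝ} (hr : 0 < r) (hρ : 0 < ρ) (ha : 0 ≤ a)
    (hab : a ≤ b) :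
    r ^ p ≤ ρ ^ a * r ^ (p - a) + ρ ^ (a - b) * r ^ (p + b - a) := by
  have hsmall : 0 ≤ ρ ^ a * r ^ (p - a) := by positivity
  have hlarge : 0 ≤ ρ ^ (a - b) * r ^ (p + b - a) := by positivity
  rcases le_total r ρ with hrρ | hρr
  · calc r ^ p = r ^ a * r ^ (p - a) := by rw [← Real.rpow_add hr]; ring_nf
      _ ≤ ρ ^ a * r ^ (p - a) := by gcongr
      _ ≤ _ := le_add_of_nonneg_right hlarge
  · calc r ^ p = r ^ (a - b) * r ^ (p + b - a) := by rw [← Real.rpow_add hr]; ring_nf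
      _ ≤ ρ ^ (a - b) * r ^ (p + b - a) := by
        gcongr ?_ * _
        exact Real.rpow_le_rpow_of_nonpos hρ hρr (by linarith)
      _ ≤ _ := le_add_of_nonneg_left hsmall

theorem setLIntegral_rpow_mul_le_split {μ : Measure ℝ} {S : Set ℝ} (hS_pos : S ⊆ Set.Ioi 0)
    {g : ℝ → ℝ} (hg : Measurable g) (hg_nonneg : ∀ r, 0 ≤ g r)
    {ρ a b p : ℝ} (hρ : 0 < ρ) (ha : 0 ≤ a) (hab : a ≤ b) :
    ∫⁻ r in S, ENNReal.ofReal (r ^ p * g r) ∂μ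
      ≤ ENNReal.ofReal (ρ ^ a) * ∫⁻ r in S, ENNReal.ofReal (r ^ (p - a) * g r) ∂μ
        + ENNReal.ofReal (ρ ^ (a - b))
          * ∫⁻ r in S, ENNReal.ofReal (r ^ (p + b - a) * g r) ∂μ := by
  rw [← lintegral_const_mul' _ _ ENNReal.ofReal_ne_top,
    ← lintegral_const_mul' _ _ ENNReal.ofReal_ne_top, ← lintegral_add_left (by fun_prop)]
  refine setLIntegral_mono (by fun_prop) fun r hr => ?_
  have hr : 0 < r := hS_pos hr
  have hgr := hg_nonneg r
  rw [← ENNReal.ofReal_mul (Real.rpow_nonneg hρ.le _),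
    ← ENNReal.ofReal_mul (Real.rpow_nonneg hρ.le _),
    ← ENNReal.ofReal_add (by positivity) (by positivity)]
  refine ENNReal.ofReal_le_ofReal ?_
  calc r ^ p * g r ≤ (ρ ^ a * r ^ (p - a) + ρ ^ (a - b) * r ^ (p + b - a)) * g r :=
        mul_le_mul_of_nonneg_right (rpow_le_add_of_split hr hρ ha hab) hgr
    _ = _ := by ring

theorem split_decay_le {x q s ε D₁ D₂ : ℝ} (hx : 1 ≤ x) (hs : s ≤ 1) (hD₁ : 0 ≤ D₁) :
    x ^ ε * (D₁ * x ^ (-q)) + x ^ (ε - s) * (D₂ * x ^ (-q + 1))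
      ≤ 2 * max D₁ D₂ * x ^ (-q + 1 - s + ε) := by
  have hx0 : 0 < x := by linarith
  have hfirst : x ^ ε * x ^ (-q) ≤ x ^ (-q + 1 - s + ε) := by
    rw [← Real.rpow_add hx0]
    exact Real.rpow_le_rpow_of_exponent_le hx (by linarith)
  have hsecond : x ^ (ε - s) * x ^ (-q + 1) = x ^ (-q + 1 - s + ε) := by
    rw [← Real.rpow_add hx0]; ring_nf
  calc x ^ ε * (D₁ * x ^ (-q)) + x ^ (ε - s) * (D₂ * x ^ (-q + 1))
      = D₁ * (x ^ ε * x ^ (-q)) + D₂ * (x ^ (ε - s) * x ^ (-q + 1)) := by ring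
    _ ≤ max D₁ D₂ * x ^ (-q + 1 - s + ε) + max D₁ D₂ * x ^ (-q + 1 - s + ε) := by
      rw [hsecond]
      gcongr
      exacts [le_max_left _ _, le_max_right _ _]
    _ = 2 * max D₁ D₂ * x ^ (-q + 1 - s + ε) := by ring

/-- **Interpolation between two `r^p`-weighted energies.**
For `R > 0`, `s ∈ (0,1]`, `ε ∈ (0,s)` there is a constant `C` (depending only on
`R, s, ε`) such that: whenever `D₁, D₂ > 0` and a measurable `f` satisfies, for every
`τ ≥ 0`, `∫_R^∞ r^{p−ε} f(τ,r)² dr ≤ D₁ (1+τ)^{−q}` and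
`∫_R^∞ r^{p+s−ε} f(τ,r)² dr ≤ D₂ (1+τ)^{−q+1}`, one has
`∫_R^∞ r^p f(τ,r)² dr ≤ C max{D₁,D₂} (1+τ)^{−q+1−s+ε}` for all `τ ≥ 0`.
(The nonnegative integrals are interpreted as Lebesgue lower integrals in `ℝ≥0∞`.) -/
theorem rp_weighted_interpolation
    (R s ε : ℝ) (hR : 0 < R) (hs : s ∈ Set.Ioc (0:ℝ) 1) (hε : ε ∈ Set.Ioo (0:ℝ) s) :
    ∃ C > (0:ℝ), ∀ (p q D₁ D₂ : ℝ), 0 < D₁ → 0 < D₂ →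
      ∀ f : ℝ → ℝ → ℝ, Measurable (Function.uncurry f) →
      (∀ τ ≥ (0:ℝ),
        ∫⁻ r in Set.Ioi R, ENNReal.ofReal (r ^ (p - ε) * (f τ r) ^ 2)
          ≤ ENNReal.ofReal (D₁ * (1 + τ) ^ (-q))) →
      (∀ τ ≥ (0:ℝ),
        ∫⁻ r in Set.Ioi R, ENNReal.ofReal (r ^ (p + s - ε) * (f τ r) ^ 2)
          ≤ ENNReal.ofReal (D₂ * (1 + τ) ^ (-q + 1))) →
      ∀ τ ≥ (0:ℝ),
        ∫⁻ r in Set.Ioi R, ENNReal.ofReal (r ^ p * (f τ r) ^ 2)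
          ≤ ENNReal.ofReal (C * max D₁ D₂ * (1 + τ) ^ (-q + 1 - s + ε)) := by
  refine ⟨2, two_pos, fun p q D₁ D₂ hD₁ hD₂ f hf h₁ h₂ τ hτ => ?_⟩
  have hfτ : Measurable fun r => f τ r ^ 2 := (hf.comp measurable_prodMk_left).pow_const 2
  have hτ1 : 1 ≤ 1 + τ := by linarith
  have hτ0 : 0 ≤ 1 + τ := by linarith
  calc ∫⁻ r in Set.Ioi R, ENNReal.ofReal (r ^ p * f τ r ^ 2)
    _ ≤ ENNReal.ofReal ((1 + τ) ^ ε) * ENNReal.ofReal (D₁ * (1 + τ) ^ (-q))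
        + ENNReal.ofReal ((1 + τ) ^ (ε - s)) * ENNReal.ofReal (D₂ * (1 + τ) ^ (-q + 1)) := by
      refine (setLIntegral_rpow_mul_le_split (Set.Ioi_subset_Ioi hR.le) hfτ
        (fun r => sq_nonneg _) (by linarith : (0:ℝ) < 1 + τ) hε.1.le hε.2.le).trans ?_
      gcongr
      exacts [h₁ τ hτ, h₂ τ hτ]
    _ = ENNReal.ofReal ((1 + τ) ^ ε * (D₁ * (1 + τ) ^ (-q))
          + (1 + τ) ^ (ε - s) * (D₂ * (1 + τ) ^ (-q + 1))) := by
      rw [ENNReal.ofReal_add (by positivity) (by positivity),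
        ENNReal.ofReal_mul (Real.rpow_nonneg hτ0 _), ENNReal.ofReal_mul (Real.rpow_nonneg hτ0 _)]
    _ ≤ _ := ENNReal.ofReal_le_ofReal (split_decay_le hτ1 hs.2 hD₁.le)
end

section
/- Let K denote the operator (K u)(τ, r, θ) = r^{3/2} ∂_r u(τ, r, θ) acting on smooth functions u : ℝ × (0, ∞) × ℝ³ → ℝ, and let Δ_θ u = Σ_{a=1}^{3} ∂²_{θ^a} u. Define Q₀ u = −(3/(4r²)) u − 2 ∂_r ∂_τ u + ∂_r² u + r^{−2} Δ_θ u and Q₁ u = −2 ∂_r ∂_τ u + ∂_r² u − r^{−1} ∂_τ u − r^{−1} ∂_r u + r^{−2} Δ_θ u. Then for every smooth u, (K + 2 r^{1/2})(Q₀ u) = Q₁ (K u) at every point of ℝ × (0, ∞) × ℝ³. -/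
noncomputable section

/-- Partial derivative in the radial (second) variable. -/
def pdr3 (u : ℝ → ℝ → (Fin 3 → ℝ) → ℝ) : ℝ → ℝ → (Fin 3 → ℝ) → ℝ :=
  fun τ r θ => deriv (fun x => u τ x θ) r

/-- Partial derivative in the time (first) variable. -/
def pdt3 (u : ℝ → ℝ → (Fin 3 → ℝ) → ℝ) : ℝ → ℝ → (Fin 3 → ℝ) → ℝ :=
  fun τ r θ => deriv (fun t => u t r θ) τ

/-- Partial derivative in the angular variable `θ^a`. -/
def pdth3 (a : Fin 3) (u : ℝ → ℝ → (Fin 3 → ℝ) → ℝ) : ℝ → ℝ → (Fin 3 → ℝ) → ℝ :=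
  fun τ r θ => deriv (fun x => u τ r (Function.update θ a x)) (θ a)

/-- The (flat) angular Laplacian `Δ_θ u = Σ_{a} ∂²_{θ^a} u`. -/
def lap3 (u : ℝ → ℝ → (Fin 3 → ℝ) → ℝ) : ℝ → ℝ → (Fin 3 → ℝ) → ℝ :=
  fun τ r θ => ∑ a, pdth3 a (pdth3 a u) τ r θ

/-- The commutator vector field `K = r^{3/2} ∂_r`. -/
def K3 (u : ℝ → ℝ → (Fin 3 → ℝ) → ℝ) : ℝ → ℝ → (Fin 3 → ℝ) → ℝ :=
  fun τ r θ => r ^ ((3:ℝ)/2) * pdr3 u τ r θ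

/-- `Q₀ u = −(3/(4r²)) u − 2 ∂_r ∂_τ u + ∂_r² u + r^{−2} Δ_θ u`. -/
def Q0 (u : ℝ → ℝ → (Fin 3 → ℝ) → ℝ) : ℝ → ℝ → (Fin 3 → ℝ) → ℝ :=
  fun τ r θ => -(3 / (4 * r ^ 2)) * u τ r θ - 2 * pdr3 (pdt3 u) τ r θ
    + pdr3 (pdr3 u) τ r θ + r ^ (-2:ℝ) * lap3 u τ r θ

/-- `Q₁ u = −2 ∂_r ∂_τ u + ∂_r² u − r^{−1} ∂_τ u − r^{−1} ∂_r u + r^{−2} Δ_θ u`. -/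
def Q1 (u : ℝ → ℝ → (Fin 3 → ℝ) → ℝ) : ℝ → ℝ → (Fin 3 → ℝ) → ℝ :=
  fun τ r θ => -2 * pdr3 (pdt3 u) τ r θ + pdr3 (pdr3 u) τ r θ
    - r⁻¹ * pdt3 u τ r θ - r⁻¹ * pdr3 u τ r θ + r ^ (-2:ℝ) * lap3 u τ r θ

/-!
Both sides are expanded with the Leibniz rule in `r`. The only analytic input is that `∂_r`
commutes with `∂_τ` and with each `∂_{θ^a}` on the open set `r > 0` (Schwarz's theorem).
In `(K + 2 r^{1/2})(Q₀ u)` the terms in `u` cancel, since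
`r^{3/2} ∂_r (-3/(4r²)) = 3/(2 r^{3/2}) = 2 r^{1/2} · 3/(4r²)`, and likewise the terms in
`Δ_θ u`, by the same computation for `r^{-2}`; writing `r = s²`, what remains agrees with
`Q₁ (K u)` term by term.
-/

open Set Topology

abbrev Point3 := ℝ × ℝ × (Fin 3 → ℝ)

abbrev Field3 := ℝ → ℝ → (Fin 3 → ℝ) → ℝ

def uncurry3 (u : Field3) (p : Point3) : ℝ := u p.1 p.2.1 p.2.2

def posRadius : Set Point3 := univ ×ˢ (Ioi 0 ×ˢ univ)

lemma isOpen_posRadius : IsOpen posRadius := isOpen_univ.prod (isOpen_Ioi.prod isOpen_univ)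

lemma mk_mem_posRadius (τ : ℝ) {r : ℝ} (θ : Fin 3 → ℝ) (hr : 0 < r) : (τ, r, θ) ∈ posRadius := by
  simp [posRadius, hr]

def SmoothOnPosRadius (u : Field3) : Prop := ContDiffOn ℝ (⊤ : ℕ∞) (uncurry3 u) posRadius

def IsDirectionalPartial (D : Field3 → Field3) (e : Point3) : Prop :=
  ∀ u q, DifferentiableAt ℝ (uncurry3 u) q → uncurry3 (D u) q = fderiv ℝ (uncurry3 u) q e

lemma isDirectionalPartial_pdt3 : IsDirectionalPartial pdt3 (1, 0, 0) := by
  rintro u ⟨τ, r, θ⟩ hu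
  have hline : HasDerivAt (fun t : ℝ => ((t, r, θ) : Point3)) (1, 0, 0) τ :=
    (hasDerivAt_id τ).prodMk ((hasDerivAt_const τ r).prodMk (hasDerivAt_const τ θ))
  exact (hu.hasFDerivAt.comp_hasDerivAt τ hline).deriv

lemma isDirectionalPartial_pdr3 : IsDirectionalPartial pdr3 (0, 1, 0) := by
  rintro u ⟨τ, r, θ⟩ hu
  have hline : HasDerivAt (fun x : ℝ => ((τ, x, θ) : Point3)) (0, 1, 0) r :=
    (hasDerivAt_const r τ).prodMk ((hasDerivAt_id r).prodMk (hasDerivAt_const r θ))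
  exact (hu.hasFDerivAt.comp_hasDerivAt r hline).deriv

lemma isDirectionalPartial_pdth3 (a : Fin 3) :
    IsDirectionalPartial (pdth3 a) (0, 0, Pi.single a 1) := by
  rintro u ⟨τ, r, θ⟩ hu
  have hline : HasDerivAt (fun x : ℝ => ((τ, r, Function.update θ a x) : Point3))
      (0, 0, Pi.single a 1) (θ a) :=
    (hasDerivAt_const _ τ).prodMk ((hasDerivAt_const _ r).prodMk (hasDerivAt_update θ a (θ a)))
  exact (hu.hasFDerivAt.comp_hasDerivAt_of_eq (θ a) hline (by simp)).deriv

namespace SmoothOnPosRadius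

variable {u : Field3} {D D' : Field3 → Field3} {e e' q : Point3} {r : ℝ}

lemma differentiableAt (hu : SmoothOnPosRadius u) (hq : q ∈ posRadius) :
    DifferentiableAt ℝ (uncurry3 u) q :=
  (hu.contDiffAt (isOpen_posRadius.mem_nhds hq)).differentiableAt (by simp)

lemma contDiffOn_fderiv (hu : SmoothOnPosRadius u) :
    ContDiffOn ℝ (⊤ : ℕ∞) (fderiv ℝ (uncurry3 u)) posRadius :=
  ((contDiffOn_infty_iff_fderiv_of_isOpen isOpen_posRadius).1 hu).2

lemma partialDeriv (hu : SmoothOnPosRadius u) (hD : IsDirectionalPartial D e) :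
    SmoothOnPosRadius (D u) :=
  (hu.contDiffOn_fderiv.clm_apply contDiffOn_const).congr fun _ hq => hD u _ (hu.differentiableAt hq)

lemma fderiv_partialDeriv (hu : SmoothOnPosRadius u) (hD : IsDirectionalPartial D e)
    (hq : q ∈ posRadius) (v : Point3) :
    fderiv ℝ (uncurry3 (D u)) q v = fderiv ℝ (fderiv ℝ (uncurry3 u)) q v e := by
  have heq : uncurry3 (D u) =ᶠ[𝓝 q] fun p => fderiv ℝ (uncurry3 u) p e := by
    filter_upwards [isOpen_posRadius.mem_nhds hq] with p hp using hD u p (hu.differentiableAt hp)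
  have hdiff : DifferentiableAt ℝ (fderiv ℝ (uncurry3 u)) q :=
    (hu.contDiffOn_fderiv.contDiffAt (isOpen_posRadius.mem_nhds hq)).differentiableAt (by simp)
  rw [heq.fderiv_eq, fderiv_clm_apply hdiff (differentiableAt_const e)]
  simp

lemma partialDeriv_comm (hu : SmoothOnPosRadius u) (hD : IsDirectionalPartial D e)
    (hD' : IsDirectionalPartial D' e') (hq : q ∈ posRadius) :
    uncurry3 (D (D' u)) q = uncurry3 (D' (D u)) q := by
  rw [hD _ q ((hu.partialDeriv hD').differentiableAt hq),
    hD' _ q ((hu.partialDeriv hD).differentiableAt hq),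
    hu.fderiv_partialDeriv hD' hq, hu.fderiv_partialDeriv hD hq]
  exact ((hu.contDiffAt (isOpen_posRadius.mem_nhds hq)).isSymmSndFDerivAt
    (by simpa using WithTop.coe_le_coe.2 (le_top : (2 : ℕ∞) ≤ ⊤))) e e'

lemma hasDerivAt_pdr3 (hu : SmoothOnPosRadius u) (τ : ℝ) (θ : Fin 3 → ℝ) (hr : 0 < r) :
    HasDerivAt (fun x => u τ x θ) (pdr3 u τ r θ) r := by
  have hline : DifferentiableAt ℝ (fun x : ℝ => ((τ, x, θ) : Point3)) r := by fun_prop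
  have hdiff := (hu.differentiableAt (mk_mem_posRadius τ θ hr)).comp r hline
  exact hdiff.hasDerivAt

lemma pdt3 (hu : SmoothOnPosRadius u) : SmoothOnPosRadius (pdt3 u) :=
  hu.partialDeriv isDirectionalPartial_pdt3

lemma pdr3 (hu : SmoothOnPosRadius u) : SmoothOnPosRadius (pdr3 u) :=
  hu.partialDeriv isDirectionalPartial_pdr3

lemma lap3 (hu : SmoothOnPosRadius u) : SmoothOnPosRadius (lap3 u) :=
  ContDiffOn.sum (s := Finset.univ) fun a _ =>
    (hu.partialDeriv (isDirectionalPartial_pdth3 a)).partialDeriv (isDirectionalPartial_pdth3 a)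

end SmoothOnPosRadius

section RadialCalculus

variable {u : Field3} {τ r : ℝ} {θ : Fin 3 → ℝ}

lemma pdr3_eq_of_hasDerivAt {g : ℝ → ℝ} {g' : ℝ} (hg : HasDerivAt g g' r)
    (h : ∀ x, 0 < x → u τ x θ = g x) (hr : 0 < r) : pdr3 u τ r θ = g' :=
  (hg.congr_of_eventuallyEq
    (by filter_upwards [eventually_gt_nhds hr] with x hx using h x hx)).deriv

lemma pdth3_congr {v : Field3} (a : Fin 3) (h : ∀ θ, u τ r θ = v τ r θ) (θ : Fin 3 → ℝ) :
    pdth3 a u τ r θ = pdth3 a v τ r θ := by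
  simp only [pdth3, h]

lemma pdt3_radial_mul (f : ℝ → ℝ) (u : Field3) :
    pdt3 (fun τ r θ => f r * u τ r θ) = fun τ r θ => f r * pdt3 u τ r θ := by
  ext τ r θ
  exact congrFun (deriv_const_mul_field' _) τ

lemma pdth3_radial_mul (a : Fin 3) (f : ℝ → ℝ) (u : Field3) :
    pdth3 a (fun τ r θ => f r * u τ r θ) = fun τ r θ => f r * pdth3 a u τ r θ := by
  ext τ r θ
  exact congrFun (deriv_const_mul_field' _) (θ a)

lemma lap3_radial_mul (f : ℝ → ℝ) (u : Field3) :
    lap3 (fun τ r θ => f r * u τ r θ) = fun τ r θ => f r * lap3 u τ r θ := by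
  ext τ r θ
  simp only [lap3, pdth3_radial_mul, Finset.mul_sum]

lemma pdt3_pdr3_comm (hu : SmoothOnPosRadius u) (hr : 0 < r) :
    pdt3 (pdr3 u) τ r θ = pdr3 (pdt3 u) τ r θ :=
  hu.partialDeriv_comm isDirectionalPartial_pdt3 isDirectionalPartial_pdr3
    (mk_mem_posRadius τ θ hr)

lemma pdr3_lap3_comm (hu : SmoothOnPosRadius u) (hr : 0 < r) :
    pdr3 (lap3 u) τ r θ = lap3 (pdr3 u) τ r θ := by
  have hθ := isDirectionalPartial_pdth3
  have hsum := HasDerivAt.fun_sum (u := Finset.univ) fun a _ =>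
    ((hu.partialDeriv (hθ a)).partialDeriv (hθ a)).hasDerivAt_pdr3 τ θ hr
  refine hsum.deriv.trans (Finset.sum_congr rfl fun a _ => ?_)
  refine ((hu.partialDeriv (hθ a)).partialDeriv_comm isDirectionalPartial_pdr3 (hθ a)
    (mk_mem_posRadius τ θ hr)).trans ?_
  exact pdth3_congr a (fun θ' =>
    hu.partialDeriv_comm isDirectionalPartial_pdr3 (hθ a) (mk_mem_posRadius τ θ' hr)) θ

lemma hasDerivAt_rpow_of_sub_one_eq {p q : ℝ} (hr : 0 < r) (hq : p - 1 = q) :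
    HasDerivAt (fun x => x ^ p) (p * r ^ q) r :=
  hq ▸ Real.hasDerivAt_rpow_const (Or.inl hr.ne')

lemma hasDerivAt_inverse_square_potential (hr : 0 < r) :
    HasDerivAt (fun x : ℝ => -(3 / (4 * x ^ 2))) (3 / (2 * r ^ 3)) r := by
  have hf : (fun x : ℝ => -(3 / (4 * x ^ 2))) = fun x => -3 * (4 * x ^ 2)⁻¹ := by
    ext x
    ring
  rw [hf]
  refine ((((hasDerivAt_pow 2 r).const_mul 4).fun_inv (by positivity)).const_mul
    (-3)).congr_deriv ?_
  field_simp
  ring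

end RadialCalculus

section Expansions

variable {u : Field3} {τ r : ℝ} {θ : Fin 3 → ℝ}

lemma pdr3_Q0 (hu : SmoothOnPosRadius u) (hr : 0 < r) :
    pdr3 (Q0 u) τ r θ = 3 / (2 * r ^ 3) * u τ r θ - 3 / (4 * r ^ 2) * pdr3 u τ r θ
      - 2 * pdr3 (pdr3 (pdt3 u)) τ r θ + pdr3 (pdr3 (pdr3 u)) τ r θ
      - 2 * r ^ (-3 : ℝ) * lap3 u τ r θ + r ^ (-2 : ℝ) * pdr3 (lap3 u) τ r θ := by
  have h := ((((hasDerivAt_inverse_square_potential hr).mul (hu.hasDerivAt_pdr3 τ θ hr)).sub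
    ((hu.pdt3.pdr3.hasDerivAt_pdr3 τ θ hr).const_mul 2)).add
      (hu.pdr3.pdr3.hasDerivAt_pdr3 τ θ hr)).add
    ((hasDerivAt_rpow_of_sub_one_eq hr (by norm_num : (-2 : ℝ) - 1 = -3)).mul
      (hu.lap3.hasDerivAt_pdr3 τ θ hr))
  exact h.deriv.trans (by ring)

lemma pdr3_K3 (hu : SmoothOnPosRadius u) (hr : 0 < r) :
    pdr3 (K3 u) τ r θ
      = 3 / 2 * r ^ ((1 : ℝ) / 2) * pdr3 u τ r θ + r ^ ((3 : ℝ) / 2) * pdr3 (pdr3 u) τ r θ :=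
  ((hasDerivAt_rpow_of_sub_one_eq hr (by norm_num : (3 : ℝ) / 2 - 1 = 1 / 2)).mul
    (hu.pdr3.hasDerivAt_pdr3 τ θ hr)).deriv

lemma pdr3_pdr3_K3 (hu : SmoothOnPosRadius u) (hr : 0 < r) :
    pdr3 (pdr3 (K3 u)) τ r θ = 3 / 4 * r ^ (-(1 : ℝ) / 2) * pdr3 u τ r θ
      + 3 * r ^ ((1 : ℝ) / 2) * pdr3 (pdr3 u) τ r θ
      + r ^ ((3 : ℝ) / 2) * pdr3 (pdr3 (pdr3 u)) τ r θ := by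
  have h := (((hasDerivAt_rpow_of_sub_one_eq hr
      (by norm_num : (1 : ℝ) / 2 - 1 = -1 / 2)).const_mul (3 / 2)).mul
    (hu.pdr3.hasDerivAt_pdr3 τ θ hr)).add
    ((hasDerivAt_rpow_of_sub_one_eq hr (by norm_num : (3 : ℝ) / 2 - 1 = 1 / 2)).mul
      (hu.pdr3.pdr3.hasDerivAt_pdr3 τ θ hr))
  exact (pdr3_eq_of_hasDerivAt h (fun x hx => pdr3_K3 hu hx) hr).trans (by ring)

lemma pdt3_K3 (hu : SmoothOnPosRadius u) (hr : 0 < r) :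
    pdt3 (K3 u) τ r θ = r ^ ((3 : ℝ) / 2) * pdr3 (pdt3 u) τ r θ := by
  unfold K3
  simp only [pdt3_radial_mul]
  rw [pdt3_pdr3_comm hu hr]

lemma pdr3_pdt3_K3 (hu : SmoothOnPosRadius u) (hr : 0 < r) :
    pdr3 (pdt3 (K3 u)) τ r θ = 3 / 2 * r ^ ((1 : ℝ) / 2) * pdr3 (pdt3 u) τ r θ
      + r ^ ((3 : ℝ) / 2) * pdr3 (pdr3 (pdt3 u)) τ r θ :=
  pdr3_eq_of_hasDerivAt ((hasDerivAt_rpow_of_sub_one_eq hr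
    (by norm_num : (3 : ℝ) / 2 - 1 = 1 / 2)).mul (hu.pdt3.pdr3.hasDerivAt_pdr3 τ θ hr))
    (fun x hx => pdt3_K3 hu hx) hr

lemma lap3_K3 (hu : SmoothOnPosRadius u) (hr : 0 < r) :
    lap3 (K3 u) τ r θ = r ^ ((3 : ℝ) / 2) * pdr3 (lap3 u) τ r θ := by
  unfold K3
  rw [lap3_radial_mul, pdr3_lap3_comm hu hr]

end Expansions

/-- **The key commutation identity `(K + 2 r^{1/2})(Q₀ u) = Q₁ (K u)`** (eqn. (Q₁ K)):
conjugating `Q₀` (whose inverse-square potential has coefficient `3/4` in spatial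
dimension `n = 4`) by `K = r^{3/2} ∂_r` removes the inverse-square potential. -/
theorem K_Q0_Q1_commutation
    (u : ℝ → ℝ → (Fin 3 → ℝ) → ℝ)
    (hu : ContDiffOn ℝ (⊤ : ℕ∞)
      (fun p : ℝ × ℝ × (Fin 3 → ℝ) => u p.1 p.2.1 p.2.2)
      ((Set.univ : Set ℝ) ×ˢ ((Set.Ioi (0:ℝ)) ×ˢ (Set.univ : Set (Fin 3 → ℝ))))) :
    ∀ (τ r : ℝ), 0 < r → ∀ θ : Fin 3 → ℝ,
      K3 (Q0 u) τ r θ + 2 * r ^ ((1:ℝ)/2) * Q0 u τ r θ = Q1 (K3 u) τ r θ := by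
  intro τ r hr θ
  have hu : SmoothOnPosRadius u := hu
  simp only [Q1]
  rw [pdr3_pdt3_K3 hu hr, pdr3_pdr3_K3 hu hr, pdt3_K3 hu hr, pdr3_K3 hu hr, lap3_K3 hu hr]
  unfold K3
  rw [pdr3_Q0 hu hr]
  simp only [Q0]
  obtain ⟨s, hs, rfl⟩ : ∃ s, 0 < s ∧ r = s ^ 2 :=
    ⟨√r, Real.sqrt_pos.2 hr, (Real.sq_sqrt hr.le).symm⟩
  simp only [← Real.rpow_natCast_mul hs.le]
  norm_num [Real.rpow_neg hs.le]
  field_simp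
  ring

end
end

section
/- Let n ≥ 1 be an integer, let R > 0, let 0 ≤ c < 1, and let γ : ℝ → ℝ and η : ℝ → ℝⁿ satisfy R·|γ(σ₁) − γ(σ₂)| + |η(σ₁) − η(σ₂)| ≤ c |σ₁ − σ₂| for all σ₁, σ₂ ∈ ℝ. Then for every (X⁰, X′) ∈ ℝ × ℝⁿ there exists a unique σ ∈ ℝ such that X⁰ − σ + γ(σ) R = √( |X′ − η(σ)|² + 1 ). -/
lemma sqrt_sq_add_one_lip (a b : ℝ) (ha : 0 ≤ a) (hb : 0 ≤ b) :
    |Real.sqrt (a ^ 2 + 1) - Real.sqrt (b ^ 2 + 1)| ≤ |a - b| := by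
  have h1 : (0:ℝ) ≤ a ^ 2 + 1 := by positivity
  have h2 : (0:ℝ) ≤ b ^ 2 + 1 := by positivity
  have hs := Real.sq_sqrt h1
  have ht := Real.sq_sqrt h2
  have hsn := Real.sqrt_nonneg (a ^ 2 + 1)
  have htn := Real.sqrt_nonneg (b ^ 2 + 1)
  have hst : a * b + 1 ≤ Real.sqrt (a ^ 2 + 1) * Real.sqrt (b ^ 2 + 1) := by
    rw [← Real.sqrt_mul h1]
    apply Real.le_sqrt' (by positivity) |>.2
    nlinarith [sq_nonneg (a - b)]
  rw [← Real.sqrt_sq_eq_abs, ← Real.sqrt_sq_eq_abs (a - b)]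
  apply Real.sqrt_le_sqrt
  nlinarith

/-- **The hyperboloidal leaves with slowly moving boost and center foliate spacetime**
(Section 2.3, eqn. (foliation proof)): if `R·|γ(σ₁) − γ(σ₂)| + |η(σ₁) − η(σ₂)|
≤ c |σ₁ − σ₂|` with `0 ≤ c < 1`, then every point `(X⁰, X′)` lies on exactly one leaf
`{ X⁰ − σ + γ(σ) R = √(|X′ − η(σ)|² + 1) }`. -/
theorem hyperboloidal_foliation
    (n : ℕ) (hn : 1 ≤ n) (R c : ℝ) (hR : 0 < R) (hc0 : 0 ≤ c) (hc1 : c < 1)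
    (γ : ℝ → ℝ) (η : ℝ → EuclideanSpace ℝ (Fin n))
    (hlip : ∀ σ₁ σ₂ : ℝ, R * |γ σ₁ - γ σ₂| + ‖η σ₁ - η σ₂‖ ≤ c * |σ₁ - σ₂|) :
    ∀ (X0 : ℝ) (X' : EuclideanSpace ℝ (Fin n)),
      ∃! σ : ℝ, X0 - σ + γ σ * R = Real.sqrt (‖X' - η σ‖ ^ 2 + 1) := by
  intro X0 X'
  set f : ℝ → ℝ := fun σ => X0 + γ σ * R - Real.sqrt (‖X' - η σ‖ ^ 2 + 1) with hf
  have hlipf : LipschitzWith ⟨c, hc0⟩ f := by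
    apply LipschitzWith.of_dist_le_mul
    intro x y
    rw [Real.dist_eq, Real.dist_eq]
    have key : |Real.sqrt (‖X' - η x‖ ^ 2 + 1) - Real.sqrt (‖X' - η y‖ ^ 2 + 1)|
        ≤ ‖η x - η y‖ := by
      refine le_trans (sqrt_sq_add_one_lip _ _ (norm_nonneg _) (norm_nonneg _)) ?_
      have := norm_sub_norm_le (X' - η x) (X' - η y)
      have h2 := norm_sub_norm_le (X' - η y) (X' - η x)
      have heq : ‖(X' - η x) - (X' - η y)‖ = ‖η x - η y‖ := by
        rw [show (X' - η x) - (X' - η y) = -(η x - η y) by abel, norm_neg]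
      have heq2 : ‖(X' - η y) - (X' - η x)‖ = ‖η x - η y‖ := by
        rw [show (X' - η y) - (X' - η x) = η x - η y by abel]
      rw [abs_sub_le_iff]
      constructor <;> linarith
    have hγ : |γ x * R - γ y * R| = R * |γ x - γ y| := by
      rw [← sub_mul, abs_mul, abs_of_pos hR, mul_comm]
    have := hlip x y
    calc |f x - f y| ≤ |γ x * R - γ y * R| +
          |Real.sqrt (‖X' - η x‖ ^ 2 + 1) - Real.sqrt (‖X' - η y‖ ^ 2 + 1)| := by
          simp only [hf]
          have : X0 + γ x * R - Real.sqrt (‖X' - η x‖ ^ 2 + 1) -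
              (X0 + γ y * R - Real.sqrt (‖X' - η y‖ ^ 2 + 1)) =
              (γ x * R - γ y * R) - (Real.sqrt (‖X' - η x‖ ^ 2 + 1) -
              Real.sqrt (‖X' - η y‖ ^ 2 + 1)) := by ring
          rw [this]
          exact abs_sub _ _
      _ ≤ c * |x - y| := by rw [hγ]; linarith
  have hcon : ContractingWith ⟨c, hc0⟩ f := ⟨by exact_mod_cast hc1, hlipf⟩
  have hfix : ∀ σ : ℝ, (X0 - σ + γ σ * R = Real.sqrt (‖X' - η σ‖ ^ 2 + 1)) ↔ f σ = σ := by
    intro σ; simp only [hf]; constructor <;> intro h <;> linarith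
  refine ⟨hcon.fixedPoint f, ?_, ?_⟩
  · exact (hfix _).2 hcon.fixedPoint_isFixedPt
  · intro σ hσ
    exact hcon.fixedPoint_unique ((hfix σ).1 hσ)
end

section
/- Let k : ℝ → ℝ be a continuous function supported in [0, 1], define k̃ : ℝ → ℝ by k̃(r) = 0 for r < 0 and k̃(r) = −∫_r^∞ k(s) ds for r ≥ 0, and let h : [−1, ∞) → ℝ be continuous. Define, for t ≥ 0, (S h)(t) = ∫_{−1}^{∞} h(s) k(t − s) ds and (S̃ h)(t) = ∫_{−1}^{∞} h(s) k̃(t − s) ds. Then S̃ h is differentiable on (0, ∞) and for every t > 0, (d/dt)(S̃ h)(t) = (S h)(t) − h(t). -/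
/-!
With `K r = ∫₀^r k`, which vanishes for `r ≤ 0` and equals `1` for `r ≥ 1`, the kernel is
`k̃ = K - 𝟙_{[0,∞)}`. The Heaviside part turns `S̃ h (τ)` into `-∫_{-1}^τ h`, whose derivative
is `-h t`. In the `K` part the integrand vanishes for `s ≥ τ`, so near `t` it is an integral
over a fixed compact interval of a function that is `C¹` in `τ`; differentiating under the
integral sign gives `S h (t)`.
-/

open MeasureTheory Filter Set
open scoped Topology

theorem Continuous.eqOn_zero_compl_Ioo_of_support_subset_Icc {E : Type*} [TopologicalSpace E]
    [T2Space E] [Zero E] {f : ℝ → E} {a b : ℝ} (hf : Continuous f)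
    (hsupp : Function.support f ⊆ Icc a b) : EqOn f 0 (Ioo a b)ᶜ := by
  have hzero : EqOn f 0 (Icc a b)ᶜ := fun x hx =>
    Function.notMem_support.1 fun hfx => hx (hsupp hfx)
  rw [← interior_Icc, ← closure_compl]
  exact hzero.closure hf continuous_const

theorem integral_Ioi_eq_one_sub_intervalIntegral {k : ℝ → ℝ} (hk : Integrable k)
    (hk1 : ∀ r, 1 < r → k r = 0) (hmass : ∫ s in (0 : ℝ)..1, k s = 1) (r : ℝ) :
    ∫ s in Ioi r, k s = 1 - ∫ s in (0 : ℝ)..r, k s := by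
  have htail : ∫ s in Ioi 1, k s = 0 := setIntegral_eq_zero_of_forall_eq_zero hk1
  have hsplit_r := intervalIntegral.integral_interval_add_Ioi (a := 0) (b := r)
    hk.integrableOn hk.integrableOn
  have hsplit_1 := intervalIntegral.integral_interval_add_Ioi (a := 0) (b := 1)
    hk.integrableOn hk.integrableOn
  linarith

theorem intervalIntegral_zero_eq_zero_of_nonpos {k : ℝ → ℝ} (hk : ∀ r ≤ 0, k r = 0) {r : ℝ}
    (hr : r ≤ 0) : ∫ u in (0 : ℝ)..r, k u = 0 := by
  rw [intervalIntegral.integral_congr (g := 0) fun x hx =>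
    hk x (by rw [uIcc_of_ge hr] at hx; exact hx.2)]
  simp

theorem ite_neg_integral_Ioi_eq_primitive_sub_indicator {k : ℝ → ℝ} (hk : Continuous k)
    (hsupp : Function.support k ⊆ Icc 0 1) (hmass : ∫ s in (0 : ℝ)..1, k s = 1) (r : ℝ) :
    (if r < 0 then 0 else -∫ s in Ioi r, k s)
      = (∫ u in (0 : ℝ)..r, k u) - (Ici 0).indicator 1 r := by
  have hk_zero := hk.eqOn_zero_compl_Ioo_of_support_subset_Icc hsupp
  have hk_int : Integrable k := hk.integrable_of_hasCompactSupport
    (HasCompactSupport.of_support_subset_isCompact isCompact_Icc hsupp)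
  rw [integral_Ioi_eq_one_sub_intervalIntegral hk_int
    (fun r hr => hk_zero fun hr' => by linarith [hr'.2]) hmass]
  by_cases hr : r < 0
  · simp [hr, intervalIntegral_zero_eq_zero_of_nonpos
      (fun r hr => hk_zero fun hr' => by linarith [hr'.1]) hr.le]
  · simp [hr, not_lt.1 hr]

section Convolution

variable {G h k : ℝ → ℝ} {a T τ : ℝ}

theorem setIntegral_Ioi_mul_comp_sub_eq_Ioc (hG : ∀ r < 0, G r = 0) (hτ : τ ≤ T) :
    ∫ s in Ioi a, h s * G (τ - s) = ∫ s in Ioc a T, h s * G (τ - s) :=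
  setIntegral_eq_of_subset_of_forall_sdiff_eq_zero measurableSet_Ioi Ioc_subset_Ioi_self
    fun s ⟨hsa, hsT⟩ => by
      have hTs : T < s := lt_of_not_ge fun hsT' => hsT ⟨hsa, hsT'⟩
      rw [hG _ (by linarith), mul_zero]

theorem hasDerivAt_setIntegral_Ioc_mul_comp_sub (hG : ∀ x, HasDerivAt G (k x) x)
    (hk : Continuous k) (hh : ContinuousOn h (Icc a T)) (t : ℝ) :
    HasDerivAt (fun τ => ∫ s in Ioc a T, h s * G (τ - s))
      (∫ s in Ioc a T, h s * k (t - s)) t := by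
  have hG_cont : Continuous G := continuous_iff_continuousAt.2 fun x => (hG x).continuousAt
  have hh_meas : AEStronglyMeasurable h (volume.restrict (Ioc a T)) :=
    (hh.mono Ioc_subset_Icc_self).aestronglyMeasurable measurableSet_Ioc
  obtain ⟨C, hC⟩ := isCompact_Icc.exists_bound_of_continuousOn (f := k)
    (s := Icc (t - 1 - T) (t + 1 - a)) hk.continuousOn
  have hbound : ∀ s ∈ Ioc a T, ∀ x ∈ Metric.ball t 1, ‖h s * k (x - s)‖ ≤ ‖h s‖ * C := by
    intro s hs x hx
    rw [Real.ball_eq_Ioo, mem_Ioo] at hx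
    rw [norm_mul]
    exact mul_le_mul_of_nonneg_left
      (hC _ ⟨by linarith [hs.2], by linarith [hs.1]⟩) (norm_nonneg _)
  refine (hasDerivAt_integral_of_dominated_loc_of_deriv_le (Metric.ball_mem_nhds t one_pos)
    (Eventually.of_forall fun x =>
      hh_meas.mul (hG_cont.comp (continuous_const.sub continuous_id)).aestronglyMeasurable)
    ?_ (hh_meas.mul (hk.comp (continuous_const.sub continuous_id)).aestronglyMeasurable)
    ((ae_restrict_iff' measurableSet_Ioc).2 (Eventually.of_forall hbound)) ?_
    (Eventually.of_forall fun s x _ =>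
      ((hG (x - s)).comp_sub_const x s).const_mul (h s))).2
  · exact (hh.mul (hG_cont.comp (continuous_const.sub continuous_id)).continuousOn
      |>.integrableOn_Icc).mono_set Ioc_subset_Icc_self
  · exact (hh.norm.mul continuousOn_const |>.integrableOn_Icc).mono_set Ioc_subset_Icc_self

theorem setIntegral_Ioi_mul_sub_heaviside (hG : Continuous G) (hG0 : ∀ r < 0, G r = 0)
    (hh : ContinuousOn h (Icc a T)) (hτ : τ ∈ Ioo a T) :
    ∫ s in Ioi a, h s * (G (τ - s) - (Ici 0).indicator 1 (τ - s))
      = (∫ s in Ioc a T, h s * G (τ - s)) - ∫ s in a..τ, h s := by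
  have hvanish : ∀ r < 0, G r - (Ici 0).indicator 1 r = 0 := fun r hr => by
    rw [hG0 r hr, indicator_of_notMem (notMem_Ici.2 hr), sub_self]
  have hpointwise : (fun s => h s * (G (τ - s) - (Ici 0).indicator 1 (τ - s)))
      = fun s => h s * G (τ - s) - (Iic τ).indicator h s := by
    ext s
    by_cases hs : s ≤ τ
    · simp [hs, mul_sub]
    · simp [hs, show ¬ 0 ≤ τ - s by linarith]
  have hprod_int : IntegrableOn (fun s => h s * G (τ - s)) (Ioc a T) :=
    (hh.mul (hG.comp (continuous_const.sub continuous_id)).continuousOn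
      |>.integrableOn_Icc).mono_set Ioc_subset_Icc_self
  have hh_int : IntegrableOn h (Ioc a T) :=
    hh.integrableOn_Icc.mono_set Ioc_subset_Icc_self
  rw [setIntegral_Ioi_mul_comp_sub_eq_Ioc hvanish hτ.2.le, hpointwise,
    integral_sub hprod_int (hh_int.indicator measurableSet_Iic),
    setIntegral_indicator measurableSet_Iic, Ioc_inter_Iic, min_eq_right hτ.2.le,
    intervalIntegral.integral_of_le hτ.1.le]

theorem hasDerivAt_setIntegral_Ioi_mul_primitive_sub_heaviside (hk : Continuous k)
    (hk0 : ∀ r ≤ 0, k r = 0) (hh : ContinuousOn h (Ici a)) {t : ℝ} (ht : a < t) :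
    HasDerivAt
      (fun τ => ∫ s in Ioi a, h s * ((∫ u in (0 : ℝ)..τ - s, k u) - (Ici 0).indicator 1 (τ - s)))
      ((∫ s in Ioi a, h s * k (t - s)) - h t) t := by
  have hprimitive : ∀ x, HasDerivAt (fun r => ∫ u in (0 : ℝ)..r, k u) (k x) x := fun x =>
    (hk.integral_hasStrictDerivAt 0 x).hasDerivAt
  have hh_Icc : ContinuousOn h (Icc a (t + 1)) := hh.mono Icc_subset_Ici_self
  have hloc : (fun τ => ∫ s in Ioi a,
      h s * ((∫ u in (0 : ℝ)..τ - s, k u) - (Ici 0).indicator 1 (τ - s))) =ᶠ[𝓝 t]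
      fun τ => (∫ s in Ioc a (t + 1), h s * ∫ u in (0 : ℝ)..τ - s, k u) - ∫ s in a..τ, h s := by
    filter_upwards [Ioo_mem_nhds ht (lt_add_one t)] with τ hτ
    exact setIntegral_Ioi_mul_sub_heaviside (continuous_iff_continuousAt.2 fun x =>
      (hprimitive x).continuousAt)
      (fun r hr => intervalIntegral_zero_eq_zero_of_nonpos hk0 hr.le) hh_Icc hτ
  have hFTC : HasDerivAt (fun τ => ∫ s in a..τ, h s) (h t) t :=
    intervalIntegral.integral_hasDerivAt_right
      ((hh.mono Icc_subset_Ici_self).intervalIntegrable_of_Icc ht.le)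
      ⟨Ici a, Ici_mem_nhds ht, hh.aestronglyMeasurable measurableSet_Ici⟩
      (hh.continuousAt (Ici_mem_nhds ht))
  rw [setIntegral_Ioi_mul_comp_sub_eq_Ioc (T := t + 1) (fun r hr => hk0 r hr.le) (by linarith)]
  exact ((hasDerivAt_setIntegral_Ioc_mul_comp_sub hprimitive hk hh_Icc t).sub
    hFTC).congr_of_eventuallyEq hloc

end Convolution

/-- **The relation `(S − I) h = (d/dt)(S̃ h)`**
(eqns. (relation widetilde S w S), (defn of widetilde S op)): with `k` continuous,
supported in `[0,1]` and of unit mass, `k̃(r) = 0` for `r < 0` and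
`k̃(r) = −∫_r^∞ k` for `r ≥ 0`, and `h` continuous on `[−1, ∞)`, the function
`(S̃ h)(t) = ∫_{−1}^∞ h(s) k̃(t−s) ds` is differentiable on `(0, ∞)` with
`(d/dt)(S̃ h)(t) = (S h)(t) − h(t)`, where `(S h)(t) = ∫_{−1}^∞ h(s) k(t−s) ds`. -/
theorem Stilde_derivative
    (k : ℝ → ℝ) (hk_cont : Continuous k)
    (hk_supp : Function.support k ⊆ Set.Icc 0 1)
    (hk_mass : (∫ s in (0:ℝ)..1, k s) = 1)
    (ktilde : ℝ → ℝ)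
    (hkt : ∀ r : ℝ, ktilde r = if r < 0 then 0 else -∫ s in Set.Ioi r, k s)
    (h : ℝ → ℝ) (hh : ContinuousOn h (Set.Ici (-1 : ℝ))) :
    ∀ t : ℝ, 0 < t →
      HasDerivAt (fun τ => ∫ s in Set.Ioi (-1 : ℝ), h s * ktilde (τ - s))
        ((∫ s in Set.Ioi (-1 : ℝ), h s * k (t - s)) - h t) t := by
  intro t ht
  have hktilde : ktilde = fun r => (∫ u in (0 : ℝ)..r, k u) - (Ici 0).indicator 1 r :=
    funext fun r => (hkt r).trans
      (ite_neg_integral_Ioi_eq_primitive_sub_indicator hk_cont hk_supp hk_mass r)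
  have hk_nonpos : ∀ r ≤ 0, k r = 0 := fun r hr =>
    hk_cont.eqOn_zero_compl_Ioo_of_support_subset_Icc hk_supp fun hr' => by linarith [hr'.1]
  subst hktilde
  exact hasDerivAt_setIntegral_Ioi_mul_primitive_sub_heaviside hk_cont hk_nonpos hh
    (by linarith)
end

section
/- Let β > 0, γ > 1, α > 1, A ≥ 0, ε ≥ 0, and let ω : [0, ∞) → [0, ∞) be continuous and satisfy, for every t ≥ 0, ω(t) ≤ A ∫_0^t e^{−β(t−s)} (1+s)^{−γ} ds + ε ∫_0^t e^{−β(t−s)} (1+s)^{−α} ω(s) ds. Then there is a constant C depending only on β, γ, α, ε (and bounded uniformly for ε in a bounded set) such that ω(t) ≤ C A (1+t)^{−γ} for all t ≥ 0. -/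
open MeasureTheory Set Real

/-! Multiplying by `e^{βt}` turns the damped inequality into a plain integral Grönwall inequality
for `e^{βt} w(t)` with kernel `ε (1+s)^{-α}`, whose total mass is at most `ε / (α - 1)` because
`α > 1`. This gives `w(t) ≤ e^{ε/(α-1)} A ∫_0^t e^{-β(t-s)} (1+s)^{-γ} ds`, and the convolution is
`O((1+t)^{-γ})`: on `[0, t/2]` the exponential factor is at most `e^{-βt/2}`, which beats every
power of `1 + t`, while on `[t/2, t]` the weight is at most `2^γ (1+t)^{-γ}` and the exponential
integrates to at most `1/β`. -/

theorem one_add_rpow_le_mul_exp {c p t : ℝ} (hc : 0 < c) (hp : 0 < p) (ht : 0 ≤ t) :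
    (1 + t) ^ p ≤ max 1 (p / c) ^ p * exp (c * t) := by
  set K := max 1 (p / c)
  have hK : 1 ≤ K * (c / p) :=
    calc 1 = p / c * (c / p) := by field_simp
      _ ≤ K * (c / p) := by gcongr; exact le_max_right _ _
  have hlin : 1 + t ≤ K * (1 + c / p * t) := by
    nlinarith [le_max_left 1 (p / c), mul_le_mul_of_nonneg_right hK ht]
  calc (1 + t) ^ p ≤ (K * (1 + c / p * t)) ^ p := by gcongr
    _ = K ^ p * (1 + c / p * t) ^ p := by
        rw [mul_rpow (by positivity) (by positivity)]
    _ ≤ K ^ p * exp (c / p * t) ^ p := by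
        gcongr
        linarith [add_one_le_exp (c / p * t)]
    _ = K ^ p * exp (c * t) := by
        rw [← exp_mul]; field_simp

theorem integral_one_add_rpow_neg_le {α t : ℝ} (hα : 1 < α) (ht : 0 ≤ t) :
    ∫ s in (0:ℝ)..t, (1 + s) ^ (-α) ≤ 1 / (α - 1) := by
  have hzero : (0:ℝ) ∉ uIcc 1 (1 + t) := by
    rw [uIcc_of_le (by linarith)]; exact fun h => by linarith [h.1]
  rw [intervalIntegral.integral_comp_add_left (fun x => x ^ (-α)) 1,
    integral_rpow (Or.inr ⟨by linarith, by simpa using hzero⟩), add_zero]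
  have hpos : 0 ≤ (1 + t) ^ (-α + 1) := by positivity
  calc ((1 + t) ^ (-α + 1) - 1 ^ (-α + 1)) / (-α + 1)
      = (1 - (1 + t) ^ (-α + 1)) / (α - 1) := by rw [one_rpow, ← neg_div_neg_eq]; ring_nf
    _ ≤ 1 / (α - 1) := by gcongr; linarith

theorem integral_exp_neg_mul_sub_le {β a t : ℝ} (hβ : 0 < β) :
    ∫ s in a..t, exp (-β * (t - s)) ≤ 1 / β := by
  rw [intervalIntegral.integral_comp_sub_left (fun x => exp (-β * x)),
    intervalIntegral.integral_comp_mul_left (fun x => exp x) (by linarith : -β ≠ 0),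
    integral_exp]
  simp only [sub_self, mul_zero, exp_zero, smul_eq_mul, inv_neg, neg_mul, one_div]
  nlinarith [exp_pos (-(β * (t - a))), inv_pos.2 hβ]

theorem continuousOn_one_add_rpow (p : ℝ) : ContinuousOn (fun s : ℝ => (1 + s) ^ p) (Ici 0) :=
  ContinuousOn.rpow_const (by fun_prop) fun s hs => Or.inl (by linarith [mem_Ici.1 hs])

theorem intervalIntegrable_exp_neg_mul_sub_mul_rpow (β γ t : ℝ) {x y : ℝ} (hx : 0 ≤ x)
    (hy : 0 ≤ y) :
    IntervalIntegrable (fun s => exp (-β * (t - s)) * (1 + s) ^ (-γ)) volume x y :=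
  ContinuousOn.intervalIntegrable <|
    (by fun_prop : Continuous fun s => exp (-β * (t - s))).continuousOn.mul <|
      (continuousOn_one_add_rpow _).mono fun _ hs => (le_min hx hy).trans hs.1

theorem integral_first_half_exp_neg_mul_sub_mul_rpow_le {β γ t : ℝ} (hβ : 0 ≤ β)
    (hγ : 0 ≤ γ) (ht : 0 ≤ t) :
    ∫ s in (0:ℝ)..t / 2, exp (-β * (t - s)) * (1 + s) ^ (-γ)
      ≤ exp (-(β / 2 * t)) * (t / 2) := by
  have hbound : ∀ s ∈ uIoc (0:ℝ) (t / 2),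
      ‖exp (-β * (t - s)) * (1 + s) ^ (-γ)‖ ≤ exp (-(β / 2 * t)) := by
    intro s hs
    rw [uIoc_of_le (by linarith)] at hs
    have hs₀ : 0 ≤ (1 + s) ^ (-γ) := rpow_nonneg (by linarith [hs.1]) _
    rw [Real.norm_of_nonneg (mul_nonneg (exp_nonneg _) hs₀)]
    calc exp (-β * (t - s)) * (1 + s) ^ (-γ) ≤ exp (-(β / 2 * t)) * 1 :=
          mul_le_mul (exp_le_exp.2 (by nlinarith [hs.2]))
            (rpow_le_one_of_one_le_of_nonpos (by linarith [hs.1]) (by linarith)) hs₀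
            (exp_nonneg _)
      _ = exp (-(β / 2 * t)) := mul_one _
  calc ∫ s in (0:ℝ)..t / 2, exp (-β * (t - s)) * (1 + s) ^ (-γ)
      ≤ exp (-(β / 2 * t)) * |t / 2 - 0| :=
        (le_abs_self _).trans (intervalIntegral.norm_integral_le_of_norm_le_const hbound)
    _ = exp (-(β / 2 * t)) * (t / 2) := by rw [sub_zero, abs_of_nonneg (by linarith)]

theorem integral_second_half_exp_neg_mul_sub_mul_rpow_le {β γ t : ℝ} (hβ : 0 < β)
    (hγ : 0 ≤ γ) (ht : 0 ≤ t) :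
    ∫ s in t / 2..t, exp (-β * (t - s)) * (1 + s) ^ (-γ) ≤ 2 ^ γ / β * (1 + t) ^ (-γ) := by
  have h1t : 0 < 1 + t := by linarith
  have hdecay : ∀ s ∈ Icc (t / 2) t, (1 + s) ^ (-γ) ≤ 2 ^ γ * (1 + t) ^ (-γ) := by
    intro s hs
    calc (1 + s) ^ (-γ) ≤ ((1 + t) / 2) ^ (-γ) :=
          rpow_le_rpow_of_nonpos (by positivity) (by linarith [hs.1]) (by linarith)
      _ = 2 ^ γ * (1 + t) ^ (-γ) := by
          rw [div_rpow h1t.le zero_le_two, rpow_neg zero_le_two, div_eq_mul_inv, inv_inv,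
            mul_comm]
  calc ∫ s in t / 2..t, exp (-β * (t - s)) * (1 + s) ^ (-γ)
      ≤ ∫ s in t / 2..t, exp (-β * (t - s)) * (2 ^ γ * (1 + t) ^ (-γ)) := by
        refine intervalIntegral.integral_mono_on (by linarith)
          (intervalIntegrable_exp_neg_mul_sub_mul_rpow _ _ _ (by linarith) ht)
          ((by fun_prop : Continuous _).intervalIntegrable _ _) fun s hs => ?_
        gcongr
        exact hdecay s hs
    _ = (∫ s in t / 2..t, exp (-β * (t - s))) * (2 ^ γ * (1 + t) ^ (-γ)) :=
        intervalIntegral.integral_mul_const _ _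
    _ ≤ 1 / β * (2 ^ γ * (1 + t) ^ (-γ)) := by
        gcongr
        exact integral_exp_neg_mul_sub_le hβ
    _ = 2 ^ γ / β * (1 + t) ^ (-γ) := by ring

theorem exists_integral_exp_neg_mul_sub_mul_rpow_le {β γ : ℝ} (hβ : 0 < β) (hγ : 0 ≤ γ) :
    ∃ K > 0, ∀ t ≥ (0:ℝ),
      ∫ s in (0:ℝ)..t, exp (-β * (t - s)) * (1 + s) ^ (-γ) ≤ K * (1 + t) ^ (-γ) := by
  set K₁ := max 1 ((γ + 1) / (β / 2)) ^ (γ + 1)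
  refine ⟨K₁ + 2 ^ γ / β, by positivity, fun t ht => ?_⟩
  have h1t : 0 < 1 + t := by linarith
  have hpoly := one_add_rpow_le_mul_exp (by positivity : 0 < β / 2) (by linarith : 0 < γ + 1) ht
  have hfirst : exp (-(β / 2 * t)) * (t / 2) ≤ K₁ * (1 + t) ^ (-γ) :=
    calc exp (-(β / 2 * t)) * (t / 2)
        ≤ exp (-(β / 2 * t)) * (1 + t) ^ (γ + 1) * (1 + t) ^ (-γ) := by
          rw [mul_assoc, ← rpow_add h1t, show γ + 1 + -γ = 1 by ring, rpow_one]
          gcongr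
          linarith
      _ ≤ exp (-(β / 2 * t)) * (K₁ * exp (β / 2 * t)) * (1 + t) ^ (-γ) := by gcongr
      _ = K₁ * (1 + t) ^ (-γ) := by
          rw [mul_left_comm, ← mul_assoc, mul_assoc K₁, ← exp_add, neg_add_cancel, exp_zero,
            mul_one]
  rw [← intervalIntegral.integral_add_adjacent_intervals
    (intervalIntegrable_exp_neg_mul_sub_mul_rpow β γ t le_rfl (y := t / 2) (by linarith))
    (intervalIntegrable_exp_neg_mul_sub_mul_rpow β γ t (by linarith) ht), add_mul]
  exact add_le_add
    ((integral_first_half_exp_neg_mul_sub_mul_rpow_le hβ.le hγ ht).trans hfirst)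
    (integral_second_half_exp_neg_mul_sub_mul_rpow_le hβ hγ ht)

theorem hasDerivAt_integral_of_continuousOn_Icc {E : Type*} [NormedAddCommGroup E]
    [NormedSpace ℝ E] [CompleteSpace E] {f : ℝ → E} {a b x : ℝ}
    (hf : ContinuousOn f (Icc a b)) (hx : x ∈ Ioo a b) :
    HasDerivAt (fun y => ∫ s in a..y, f s) (f x) x :=
  intervalIntegral.integral_hasDerivAt_right
    ((hf.mono (Icc_subset_Icc le_rfl hx.2.le)).intervalIntegrable_of_Icc hx.1.le)
    ((hf.mono Ioo_subset_Icc_self).stronglyMeasurableAtFilter isOpen_Ioo x hx)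
    (hf.continuousAt (Icc_mem_nhds hx.1 hx.2))

theorem continuousOn_primitive_Icc {E : Type*} [NormedAddCommGroup E]
    [NormedSpace ℝ E] {f : ℝ → E} {a b : ℝ} (hab : a ≤ b)
    (hf : ContinuousOn f (Icc a b)) :
    ContinuousOn (fun y => ∫ s in a..y, f s) (Icc a b) := by
  have := intervalIntegral.continuousOn_primitive_interval (μ := volume) (f := f)
    (by rw [uIcc_of_le hab]; exact hf.integrableOn_Icc)
  rwa [uIcc_of_le hab] at this

theorem le_mul_exp_integral_of_le_add_integral {a T c : ℝ} {b u : ℝ → ℝ} (haT : a ≤ T)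
    (hb : ContinuousOn b (Icc a T)) (hb₀ : ∀ s ∈ Icc a T, 0 ≤ b s)
    (hu : ContinuousOn u (Icc a T)) (h : ∀ t ∈ Icc a T, u t ≤ c + ∫ s in a..t, b s * u s) :
    u T ≤ c * exp (∫ s in a..T, b s) := by
  set V := fun t => c + ∫ s in a..t, b s * u s
  set B := fun t => ∫ s in a..t, b s
  have hV : ContinuousOn V (Icc a T) :=
    continuousOn_const.add (continuousOn_primitive_Icc haT (hb.mul hu))
  have hB : ContinuousOn B (Icc a T) := continuousOn_primitive_Icc haT hb
  have hderiv : ∀ t ∈ interior (Icc a T), HasDerivWithinAt (fun t => V t * exp (-B t))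
      (b t * (u t - V t) * exp (-B t)) (interior (Icc a T)) t := by
    intro t ht
    rw [interior_Icc] at ht
    have hVt : HasDerivAt V (b t * u t) t :=
      (hasDerivAt_integral_of_continuousOn_Icc (f := fun s => b s * u s) (hb.mul hu)
        ht).const_add c
    have hBt : HasDerivAt B (b t) t := hasDerivAt_integral_of_continuousOn_Icc hb ht
    refine (hVt.mul hBt.neg.exp).hasDerivWithinAt.congr_deriv ?_
    simp only [Pi.neg_apply]
    ring
  have hanti : AntitoneOn (fun t => V t * exp (-B t)) (Icc a T) := by
    refine antitoneOn_of_hasDerivWithinAt_nonpos (convex_Icc a T) (hV.mul hB.neg.rexp) hderiv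
      fun t ht => ?_
    rw [interior_Icc] at ht
    have hut := h t (Ioo_subset_Icc_self ht)
    have hbt := hb₀ t (Ioo_subset_Icc_self ht)
    exact mul_nonpos_of_nonpos_of_nonneg (mul_nonpos_of_nonneg_of_nonpos hbt (by linarith))
      (exp_nonneg _)
  have hGT : V T * exp (-B T) ≤ c := by
    simpa [V, B] using hanti (left_mem_Icc.2 haT) (right_mem_Icc.2 haT) haT
  calc u T ≤ V T := h T (right_mem_Icc.2 haT)
    _ = V T * exp (-B T) * exp (B T) := by
        rw [mul_assoc, ← exp_add, neg_add_cancel, exp_zero, mul_one]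
    _ ≤ c * exp (B T) := by gcongr

theorem integral_exp_neg_mul_sub_mul (β a t : ℝ) (g : ℝ → ℝ) :
    ∫ s in a..t, exp (-β * (t - s)) * g s = exp (-β * t) * ∫ s in a..t, exp (β * s) * g s := by
  rw [← intervalIntegral.integral_const_mul]
  congr 1 with s
  rw [← mul_assoc, ← exp_add]
  ring_nf

theorem le_exp_integral_mul_of_le_damped_integral {β a T : ℝ} {f b w : ℝ → ℝ} (haT : a ≤ T)
    (hf : IntervalIntegrable f volume a T) (hf₀ : ∀ s ∈ Icc a T, 0 ≤ f s)
    (hb : ContinuousOn b (Icc a T)) (hb₀ : ∀ s ∈ Icc a T, 0 ≤ b s)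
    (hw : ContinuousOn w (Icc a T))
    (h : ∀ t ∈ Icc a T, w t ≤ (∫ s in a..t, exp (-β * (t - s)) * f s)
      + ∫ s in a..t, exp (-β * (t - s)) * (b s * w s)) :
    w T ≤ exp (∫ s in a..T, b s) * ∫ s in a..T, exp (-β * (T - s)) * f s := by
  set F := ∫ s in a..T, exp (β * s) * f s
  set u := fun s => exp (β * s) * w s
  have hexp_inv : ∀ t, exp (β * t) * exp (-β * t) = 1 := fun t => by
    rw [← exp_add, neg_mul, add_neg_cancel, exp_zero]
  have hu : ∀ t ∈ Icc a T, u t ≤ F + ∫ s in a..t, b s * u s := by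
    intro t ht
    have hF : ∫ s in a..t, exp (β * s) * f s ≤ F := by
      refine intervalIntegral.integral_mono_interval le_rfl ht.1 ht.2 ?_
        (hf.continuousOn_mul (by fun_prop))
      filter_upwards [ae_restrict_mem measurableSet_Ioc] with s hs
      exact mul_nonneg (exp_nonneg _) (hf₀ s (Ioc_subset_Icc_self hs))
    have hwt := h t ht
    rw [integral_exp_neg_mul_sub_mul, integral_exp_neg_mul_sub_mul, ← mul_add] at hwt
    calc u t ≤ exp (β * t) * (exp (-β * t) * ((∫ s in a..t, exp (β * s) * f s)
          + ∫ s in a..t, exp (β * s) * (b s * w s))) :=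
          mul_le_mul_of_nonneg_left hwt (exp_nonneg _)
      _ = (∫ s in a..t, exp (β * s) * f s) + ∫ s in a..t, b s * u s := by
          rw [← mul_assoc, hexp_inv, one_mul]
          congr 2 with s
          ring
      _ ≤ F + ∫ s in a..t, b s * u s := by gcongr
  have hgronwall : u T ≤ F * exp (∫ s in a..T, b s) :=
    le_mul_exp_integral_of_le_add_integral haT hb hb₀
      ((by fun_prop : Continuous fun s => exp (β * s)).continuousOn.mul hw) hu
  calc w T = exp (-β * T) * u T := by rw [← mul_assoc, mul_comm (exp _), hexp_inv, one_mul]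
    _ ≤ exp (-β * T) * (F * exp (∫ s in a..T, b s)) := by gcongr
    _ = exp (∫ s in a..T, b s) * ∫ s in a..T, exp (-β * (T - s)) * f s := by
        rw [integral_exp_neg_mul_sub_mul]
        ring

/-- **Grönwall-type decay for the damped integral inequality** (analytic core of the
decay lemma for the auxiliary modulation vector `ω`): if `β > 0`, `γ > 1`, `α > 1`,
`ε ≥ 0` and a continuous nonnegative `w` on `[0, ∞)` satisfies
`w(t) ≤ A ∫_0^t e^{−β(t−s)} (1+s)^{−γ} ds + ε ∫_0^t e^{−β(t−s)} (1+s)^{−α} w(s) ds`,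
then `w(t) ≤ C A (1+t)^{−γ}` with `C = C(β, γ, α, ε)`. -/
theorem gronwall_damped_decay
    (β γ α ε : ℝ) (hβ : 0 < β) (hγ : 1 < γ) (hα : 1 < α) (hε : 0 ≤ ε) :
    ∃ C > (0:ℝ), ∀ A : ℝ, 0 ≤ A → ∀ w : ℝ → ℝ,
      ContinuousOn w (Set.Ici 0) → (∀ t ≥ (0:ℝ), 0 ≤ w t) →
      (∀ t ≥ (0:ℝ),
        w t ≤ A * (∫ s in (0:ℝ)..t, Real.exp (-β * (t - s)) * (1 + s) ^ (-γ))
              + ε * ∫ s in (0:ℝ)..t, Real.exp (-β * (t - s)) * ((1 + s) ^ (-α) * w s)) →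
      ∀ t ≥ (0:ℝ), w t ≤ C * A * (1 + t) ^ (-γ) := by
  obtain ⟨K, hK, hconv⟩ :=
    exists_integral_exp_neg_mul_sub_mul_rpow_le hβ (by linarith : 0 ≤ γ)
  refine ⟨exp (ε / (α - 1)) * K, by positivity, fun A hA w hw _ hineq t ht => ?_⟩
  have hdamped := le_exp_integral_mul_of_le_damped_integral
    (f := fun s => A * (1 + s) ^ (-γ)) (b := fun s => ε * (1 + s) ^ (-α)) ht
    ((((continuousOn_one_add_rpow (-γ)).mono Icc_subset_Ici_self).intervalIntegrable_of_Icc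
      ht).const_mul A)
    (fun s hs => mul_nonneg hA (rpow_nonneg (by linarith [hs.1]) _))
    (continuousOn_const.mul ((continuousOn_one_add_rpow _).mono Icc_subset_Ici_self))
    (fun s hs => mul_nonneg hε (rpow_nonneg (by linarith [hs.1]) _))
    (hw.mono Icc_subset_Ici_self)
    (fun x hx => by
      simpa only [← intervalIntegral.integral_const_mul, mul_left_comm, mul_assoc]
        using hineq x hx.1)
  have hkernel : ∫ s in (0:ℝ)..t, ε * (1 + s) ^ (-α) ≤ ε / (α - 1) := by
    rw [intervalIntegral.integral_const_mul, ← mul_one_div]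
    exact mul_le_mul_of_nonneg_left (integral_one_add_rpow_neg_le hα ht) hε
  calc w t ≤ exp (∫ s in (0:ℝ)..t, ε * (1 + s) ^ (-α))
        * (A * ∫ s in (0:ℝ)..t, exp (-β * (t - s)) * (1 + s) ^ (-γ)) := by
        simpa only [intervalIntegral.integral_const_mul, mul_left_comm] using hdamped
    _ ≤ exp (∫ s in (0:ℝ)..t, ε * (1 + s) ^ (-α)) * (A * (K * (1 + t) ^ (-γ))) := by
        gcongr
        exact hconv t ht
    _ ≤ exp (ε / (α - 1)) * (A * (K * (1 + t) ^ (-γ))) := by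
        gcongr
    _ = exp (ε / (α - 1)) * K * A * (1 + t) ^ (-γ) := by ring
end
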